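/- arXiv:1806.07614 — 2 statements merged into one kernel-verified Lean document; each statement's English description precedes it below -/
import Mathlib

section
/- Let S be a semigroup and (I, λ, ρ) a family of sets and maps λ[a,b]: I[ab]→I[a], ρ[a,b]: I[ab]→I[b]. If for every semigroup H the operation (x,a)⋆(y,b) = ((x∘λ[a,b])·(y∘ρ[a,b]), ab) on ⨄_{a∈S} H^{I[a]} is associative, then the family satisfies the λρ-system equations: λ[a,b]∘λ[ab,c] = λ[a,bc], ρ[b,c]∘ρ[a,bc] = ρ[ab,c], and ρ[a,b]∘λ[ab,c] = λ[b,c]∘ρ[a,bc] for all a,b,c∈S. -/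
/-- The multiplication of the candidate λρ-product on the disjoint union `⨄_{a∈S} H^{I[a]}`. -/
def lrMul {S : Type} [Mul S] (I : S → Type) (lam : ∀ a b : S, I (a * b) → I a)
    (rho : ∀ a b : S, I (a * b) → I b) (H : Type) [Mul H]
    (p q : Σ a : S, I a → H) : Σ a : S, I a → H :=
  ⟨p.1 * q.1, fun i => p.2 (lam p.1 q.1 i) * q.2 (rho p.1 q.1 i)⟩

private lemma heq_apply {γ : Type} {α β : Type} (h : α = β) {f : α → γ} {g : β → γ}
    (he : HEq f g) (x : α) : f x = g (cast h x) := by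
  subst h; rw [eq_of_heq he]; rfl

theorem stmt1 {S : Type} [Semigroup S] (I : S → Type)
    (lam : ∀ a b : S, I (a * b) → I a) (rho : ∀ a b : S, I (a * b) → I b)
    (hassoc : ∀ (H : Type) [Semigroup H], ∀ p q r : Σ a : S, I a → H,
      lrMul I lam rho H (lrMul I lam rho H p q) r
        = lrMul I lam rho H p (lrMul I lam rho H q r)) :
    (∀ (a b c : S) (x : I (a * b * c)),
      lam a b (lam (a * b) c x) = lam a (b * c) (cast (congrArg I (mul_assoc a b c)) x)) ∧
    (∀ (a b c : S) (x : I (a * b * c)),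
      rho b c (rho a (b * c) (cast (congrArg I (mul_assoc a b c)) x)) = rho (a * b) c x) ∧
    (∀ (a b c : S) (x : I (a * b * c)),
      rho a b (lam (a * b) c x)
        = lam b c (rho a (b * c) (cast (congrArg I (mul_assoc a b c)) x))) := by
  have key : ∀ (a b c : S) (x : I (a * b * c)),
      lam a b (lam (a * b) c x) = lam a (b * c) (cast (congrArg I (mul_assoc a b c)) x) ∧
      rho b c (rho a (b * c) (cast (congrArg I (mul_assoc a b c)) x)) = rho (a * b) c x ∧
      rho a b (lam (a * b) c x)
        = lam b c (rho a (b * c) (cast (congrArg I (mul_assoc a b c)) x)) := by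
    intro a b c x
    have e := hassoc (FreeSemigroup (I a ⊕ I b ⊕ I c)) ⟨a, fun i => FreeSemigroup.of (Sum.inl i)⟩
      ⟨b, fun i => FreeSemigroup.of (Sum.inr (Sum.inl i))⟩
      ⟨c, fun i => FreeSemigroup.of (Sum.inr (Sum.inr i))⟩
    simp only [lrMul] at e
    have he : HEq
        (fun i : I (a * b * c) =>
          (FreeSemigroup.of (Sum.inl (lam a b (lam (a * b) c i))) *
            FreeSemigroup.of (Sum.inr (Sum.inl (rho a b (lam (a * b) c i)))) : FreeSemigroup (I a ⊕ I b ⊕ I c)) *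
            FreeSemigroup.of (Sum.inr (Sum.inr (rho (a * b) c i))))
        (fun i : I (a * (b * c)) =>
          (FreeSemigroup.of (Sum.inl (lam a (b * c) i)) : FreeSemigroup (I a ⊕ I b ⊕ I c)) *
            (FreeSemigroup.of (Sum.inr (Sum.inl (lam b c (rho a (b * c) i)))) *
              FreeSemigroup.of (Sum.inr (Sum.inr (rho b c (rho a (b * c) i)))))) := by
      exact (Sigma.mk.inj_iff.mp e).2
    have hx := heq_apply (congrArg I (mul_assoc a b c)) he x
    have hl := congrArg (fun p : FreeSemigroup (I a ⊕ I b ⊕ I c) => p.head :: p.tail) hx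
    simp only [FreeSemigroup.head_mul, FreeSemigroup.tail_mul, FreeSemigroup.of,
      List.cons_append, List.nil_append, List.cons.injEq, Sum.inl.injEq, Sum.inr.injEq,
      and_true] at hl
    exact ⟨hl.1, hl.2.2.symm, hl.2.1⟩
  exact ⟨fun a b c x => (key a b c x).1, fun a b c x => (key a b c x).2.1,
    fun a b c x => (key a b c x).2.2⟩
end

section
/- Let 𝒮 be a λρ-system over a semigroup S such that for every monoid H, the λρ-product H^{[𝒮]} is a monoid. Then S is a monoid, and λ[a,1] = id_{I[a]} and ρ[1,a] = id_{I[a]} for all a∈S. -/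
namespace FreeMonoid

variable {α : Type*} {u v : α} {w : FreeMonoid α}

theorem eq_of_of_mul_eq_of (h : of u * w = of v) : u = v :=
  (List.cons.inj (congrArg toList h)).1

theorem eq_of_mul_of_eq_of (h : w * of u = of v) : u = v := by
  have hw : w = 1 := length_eq_zero.mp (by simpa [length_mul, length_of] using congrArg length h)
  exact of_injective (by simpa [hw] using h)

end FreeMonoid

section LambdaRhoProduct

variable {S : Type} [Mul S] (I : S → Type) (lam : ∀ a b : S, I (a * b) → I a)
  (rho : ∀ a b : S, I (a * b) → I b) {H : Type} [Mul H]

theorem lrMul_eq_left {p q : Σ a : S, I a → H} (h : lrMul I lam rho H p q = p) :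
    ∃ hq : p.1 * q.1 = p.1, ∀ x : I (p.1 * q.1),
      p.2 (lam p.1 q.1 x) * q.2 (rho p.1 q.1 x) = p.2 (cast (congrArg I hq) x) :=
  ⟨congrArg Sigma.fst h, fun x =>
    congr_heq (f := (lrMul I lam rho H p q).2) (Sigma.ext_iff.mp h).2 (cast_heq _ x).symm⟩

theorem lrMul_eq_right {p q : Σ a : S, I a → H} (h : lrMul I lam rho H p q = q) :
    ∃ hp : p.1 * q.1 = q.1, ∀ x : I (p.1 * q.1),
      p.2 (lam p.1 q.1 x) * q.2 (rho p.1 q.1 x) = q.2 (cast (congrArg I hp) x) :=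
  ⟨congrArg Sigma.fst h, fun x =>
    congr_heq (f := (lrMul I lam rho H p q).2) (Sigma.ext_iff.mp h).2 (cast_heq _ x).symm⟩

theorem fst_mul_and_mul_fst_of_lrMul_identity [Nonempty H] {e : Σ a : S, I a → H}
    (he : ∀ p, lrMul I lam rho H e p = p ∧ lrMul I lam rho H p e = p) (s : S) :
    e.1 * s = s ∧ s * e.1 = s :=
  let p : Σ a : S, I a → H := ⟨s, fun _ => Classical.arbitrary H⟩
  ⟨congrArg Sigma.fst (he p).1, congrArg Sigma.fst (he p).2⟩

end LambdaRhoProduct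

theorem stmt11_general {S : Type} [Semigroup S] (I : S → Type)
    (lam : ∀ a b : S, I (a * b) → I a) (rho : ∀ a b : S, I (a * b) → I b)
    (hmon : ∀ (H : Type) [Monoid H], ∃ e : Σ a : S, I a → H,
      ∀ p : Σ a : S, I a → H,
        lrMul I lam rho H e p = p ∧ lrMul I lam rho H p e = p) :
    ∃ one : S, ∃ (hl : ∀ s : S, one * s = s) (hr : ∀ s : S, s * one = s),
      (∀ (a : S) (x : I (a * one)), lam a one x = cast (congrArg I (hr a)) x) ∧
      (∀ (a : S) (x : I (one * a)), rho one a x = cast (congrArg I (hl a)) x) := by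
  obtain ⟨e, he⟩ := hmon Unit
  have hone := fst_mul_and_mul_fst_of_lrMul_identity I lam rho he
  have fst_eq_one : ∀ (H : Type) [Monoid H] (e' : Σ a : S, I a → H),
      (∀ p, lrMul I lam rho H e' p = p ∧ lrMul I lam rho H p e' = p) → e'.1 = e.1 :=
    fun H _ e' he' =>
      (hone e'.1).1.symm.trans (fst_mul_and_mul_fst_of_lrMul_identity I lam rho he' e.1).2
  refine ⟨e.1, fun s => (hone s).1, fun s => (hone s).2, fun a x => ?_, fun a x => ?_⟩
  · obtain ⟨⟨b, f⟩, hf⟩ := hmon (FreeMonoid (I a))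
    obtain rfl : b = e.1 := fst_eq_one _ _ hf
    obtain ⟨_, hx⟩ := lrMul_eq_left I lam rho (hf ⟨a, FreeMonoid.of⟩).2
    exact FreeMonoid.eq_of_of_mul_eq_of (hx x)
  · obtain ⟨⟨b, f⟩, hf⟩ := hmon (FreeMonoid (I a))
    obtain rfl : b = e.1 := fst_eq_one _ _ hf
    obtain ⟨_, hx⟩ := lrMul_eq_right I lam rho (hf ⟨a, FreeMonoid.of⟩).1
    exact FreeMonoid.eq_of_mul_of_eq_of (hx x)

/-- If the λρ-product `H^[𝒮]` is a monoid for every monoid `H`, then the skeleton `S`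
is a monoid and `λ[a,1] = id_{I[a]}`, `ρ[1,a] = id_{I[a]}` for all `a ∈ S`. -/
theorem stmt11 {S : Type} [Semigroup S] (I : S → Type)
    (lam : ∀ a b : S, I (a * b) → I a) (rho : ∀ a b : S, I (a * b) → I b)
    (alpha : ∀ (a b c : S) (x : I (a * b * c)),
      lam a b (lam (a * b) c x) = lam a (b * c) (cast (congrArg I (mul_assoc a b c)) x))
    (beta : ∀ (a b c : S) (x : I (a * b * c)),
      rho b c (rho a (b * c) (cast (congrArg I (mul_assoc a b c)) x)) = rho (a * b) c x)
    (gamma : ∀ (a b c : S) (x : I (a * b * c)),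
      rho a b (lam (a * b) c x) = lam b c (rho a (b * c) (cast (congrArg I (mul_assoc a b c)) x)))
    (hmon : ∀ (H : Type) [Monoid H], ∃ e : Σ a : S, I a → H,
      ∀ p : Σ a : S, I a → H,
        lrMul I lam rho H e p = p ∧ lrMul I lam rho H p e = p) :
    ∃ one : S, ∃ (hl : ∀ s : S, one * s = s) (hr : ∀ s : S, s * one = s),
      (∀ (a : S) (x : I (a * one)), lam a one x = cast (congrArg I (hr a)) x) ∧
      (∀ (a : S) (x : I (one * a)), rho one a x = cast (congrArg I (hl a)) x) :=
  stmt11_general I lam rho hmon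
end
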